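/- With the l² norm on M(2,R) and the Euclidean norm on R², for nonzero vectors u, v in R² with |v| ≤ |u|, the set {s ∈ R : κ(u,v,s) ≤ 1} is exactly the interval [−Θ(u,v), Θ(u,v)] with Θ(u,v) = (1/(|u||v|)) √(1 − |v|²/|u|²); if |v| > |u| this set is empty. -/

import Mathlib

open Matrix

/-- The section `Ψ : ℝ² \ {0} → SL(2,ℝ)`. -/
noncomputable def Psi (v : ℝ × ℝ) : Matrix (Fin 2) (Fin 2) ℝ :=
  !![v.1, -v.2 / (v.1 ^ 2 + v.2 ^ 2); v.2, v.1 / (v.1 ^ 2 + v.2 ^ 2)]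

/-- The Frobenius (`l²`) norm on `2×2` real matrices. -/
noncomputable def frob (m : Matrix (Fin 2) (Fin 2) ℝ) : ℝ :=
  Real.sqrt (∑ i : Fin 2, ∑ j : Fin 2, (m i j) ^ 2)

/-- The Euclidean norm on `ℝ²`. -/
noncomputable def enorm2 (v : ℝ × ℝ) : ℝ := Real.sqrt (v.1 ^ 2 + v.2 ^ 2)

/-- `κ(u,v,s) = ‖ Ψ(v) [[1,s],[0,0]] Ψ(u)⁻¹ ‖` for the Frobenius norm. -/
noncomputable def kappa (u v : ℝ × ℝ) (s : ℝ) : ℝ :=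
  frob (Psi v * !![1, s; 0, 0] * (Psi u)⁻¹)

/-- `Θ(u,v) = (1/(|u||v|)) √(1 − |v|²/|u|²)`. -/
noncomputable def Theta (u v : ℝ × ℝ) : ℝ :=
  (1 / (enorm2 u * enorm2 v)) * Real.sqrt (1 - enorm2 v ^ 2 / enorm2 u ^ 2)

/-! `Ψ(u)` has determinant one, so its inverse is its adjugate, and multiplying out gives
`κ(u,v,s)² = |v|² (1 + s² |u|⁴) / |u|²`. Hence `κ ≤ 1` exactly when
`s² ≤ (|u|² - |v|²) / (|u|⁴ |v|²)`, and the square root of the right-hand side is `Θ(u,v)`.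
This bound is nonnegative iff `|v| ≤ |u|`. -/

lemma sq_add_sq_pos_of_ne_zero {v : ℝ × ℝ} (hv : v ≠ 0) : 0 < v.1 ^ 2 + v.2 ^ 2 := by
  refine lt_of_le_of_ne (by positivity) fun h => hv (Prod.ext ?_ ?_) <;>
    simp only [Prod.fst_zero, Prod.snd_zero] <;> nlinarith [sq_nonneg v.1, sq_nonneg v.2]

lemma enorm2_sq (v : ℝ × ℝ) : enorm2 v ^ 2 = v.1 ^ 2 + v.2 ^ 2 :=
  Real.sq_sqrt (by positivity)

lemma enorm2_pos {v : ℝ × ℝ} (hv : v ≠ 0) : 0 < enorm2 v :=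
  Real.sqrt_pos.mpr (sq_add_sq_pos_of_ne_zero hv)

lemma Psi_inv {u : ℝ × ℝ} (hu : u ≠ 0) :
    (Psi u)⁻¹ = !![u.1 / (u.1 ^ 2 + u.2 ^ 2), u.2 / (u.1 ^ 2 + u.2 ^ 2); -u.2, u.1] := by
  have := (sq_add_sq_pos_of_ne_zero hu).ne'
  refine inv_eq_right_inv ?_
  rw [Psi, mul_fin_two, one_fin_two]
  simp only [EmbeddingLike.apply_eq_iff_eq, vecCons_inj, and_true]
  refine ⟨⟨?_, ?_⟩, ?_, ?_⟩ <;> field_simp <;> ring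

lemma kappa_nonneg (u v : ℝ × ℝ) (s : ℝ) : 0 ≤ kappa u v s := Real.sqrt_nonneg _

lemma kappa_sq {u : ℝ × ℝ} (hu : u ≠ 0) (v : ℝ × ℝ) (s : ℝ) :
    kappa u v s ^ 2 = enorm2 v ^ 2 * (1 + s ^ 2 * enorm2 u ^ 4) / enorm2 u ^ 2 := by
  have := (sq_add_sq_pos_of_ne_zero hu).ne'
  rw [kappa, Psi_inv hu, Psi, mul_fin_two, mul_fin_two, frob, Real.sq_sqrt (by positivity),
    show enorm2 u ^ 4 = (enorm2 u ^ 2) ^ 2 by ring, enorm2_sq, enorm2_sq]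
  simp only [Fin.sum_univ_two, of_apply, cons_val', cons_val_zero, cons_val_one, cons_val_fin_one]
  field_simp
  ring

lemma kappa_le_one_iff {u v : ℝ × ℝ} (hu : u ≠ 0) (hv : v ≠ 0) (s : ℝ) :
    kappa u v s ≤ 1 ↔ s ^ 2 ≤ (enorm2 u ^ 2 - enorm2 v ^ 2) / (enorm2 u ^ 4 * enorm2 v ^ 2) := by
  have ha := enorm2_pos hu
  have hb := enorm2_pos hv
  rw [← sq_le_one_iff₀ (kappa_nonneg u v s), kappa_sq hu, div_le_one (by positivity),
    le_div_iff₀ (by positivity)]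
  constructor <;> intro h <;> linarith

lemma Theta_eq_sqrt {u v : ℝ × ℝ} (hu : u ≠ 0) (hv : v ≠ 0) :
    Theta u v = √((enorm2 u ^ 2 - enorm2 v ^ 2) / (enorm2 u ^ 4 * enorm2 v ^ 2)) := by
  have ha := enorm2_pos hu
  have hb := enorm2_pos hv
  rw [Theta, show (enorm2 u ^ 2 - enorm2 v ^ 2) / (enorm2 u ^ 4 * enorm2 v ^ 2)
      = (1 / (enorm2 u * enorm2 v)) ^ 2 * (1 - enorm2 v ^ 2 / enorm2 u ^ 2) by field_simp,
    Real.sqrt_mul (by positivity), Real.sqrt_sq (by positivity)]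

/-- For the Frobenius norm: if `|v| ≤ |u|`, the set `{s : κ(u,v,s) ≤ 1}` is the interval
`[−Θ(u,v), Θ(u,v)]`; if `|v| > |u|` it is empty. -/
theorem kappa_sublevel (u v : ℝ × ℝ) (hu : u ≠ 0) (hv : v ≠ 0) :
    (enorm2 v ≤ enorm2 u →
      {s : ℝ | kappa u v s ≤ 1} = Set.Icc (-(Theta u v)) (Theta u v)) ∧
    (enorm2 u < enorm2 v → {s : ℝ | kappa u v s ≤ 1} = ∅) := by
  have ha := enorm2_pos hu
  have hb := enorm2_pos hv
  set D := (enorm2 u ^ 2 - enorm2 v ^ 2) / (enorm2 u ^ 4 * enorm2 v ^ 2)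
  rw [show {s : ℝ | kappa u v s ≤ 1} = {s | s ^ 2 ≤ D} from Set.ext (kappa_le_one_iff hu hv),
    Theta_eq_sqrt hu hv]
  refine ⟨fun hle => ?_, fun hlt => ?_⟩
  · have hD : 0 ≤ D := div_nonneg (sub_nonneg.mpr (pow_le_pow_left₀ hb.le hle 2)) (by positivity)
    exact Set.ext fun s => Real.sq_le hD
  · have hD : D < 0 :=
      div_neg_of_neg_of_pos (sub_neg.mpr (pow_lt_pow_left₀ hlt ha.le two_ne_zero)) (by positivity)
    exact Set.eq_empty_of_forall_notMem fun s hs => (sq_nonneg s).not_gt (hs.trans_lt hD)
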